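/- Reversal channel commutes with marginalization for a unitary on A (Lemma for I₄-type invariance): let U_A be unitary, V_B an isometry, ρ_A a density operator on A, ω_B a density operator on B, and R(σ) := (U_A ⊗ V_B)† σ (U_A ⊗ V_B) + Tr[(1 − 1_A ⊗ V_B V_B†)σ]·(ρ_A ⊗ ω_B). Then for every density operator σ_AB on the codomain, R(U_A ρ_A U_A† ⊗ σ_B) = ρ_A ⊗ Tr_A[R(σ_AB)], where σ_B := Tr_A[σ_AB]. -/

import Mathlib

open scoped ComplexOrder Kronecker
open Matrix

noncomputable section

/-- A density operator: positive semidefinite with unit trace. -/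
def IsDensity {n : Type*} [Fintype n] (ρ : Matrix n n ℂ) : Prop :=
  ρ.PosSemidef ∧ ρ.trace = 1

/-- Partial trace over the first (A) tensor factor. -/
def ptraceA {a b : Type*} [Fintype a] (M : Matrix (a × b) (a × b) ℂ) : Matrix b b ℂ :=
  Matrix.of fun i j => ∑ k, M (k, i) (k, j)

/-- Partial trace over the second (B) tensor factor. -/
def ptraceB {a b : Type*} [Fintype b] (M : Matrix (a × b) (a × b) ℂ) : Matrix a a ℂ :=
  Matrix.of fun i j => ∑ k, M (i, k) (j, k)

/-- The reversal channel `R(σ) = V†σV + Tr[(1 − VV†)σ]·ω`. -/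
def Reversal {H Ht : Type*} [Fintype H] [Fintype Ht] [DecidableEq Ht]
    (V : Matrix Ht H ℂ) (ω : Matrix H H ℂ) (σ : Matrix Ht Ht ℂ) : Matrix H H ℂ :=
  Vᴴ * σ * V + ((1 - V * Vᴴ) * σ).trace • ω

/-- Complete positivity and trace preservation (a quantum channel), with complete
positivity expressed via positivity of all finite amplifications `id_k ⊗ N`. -/
def IsCPTP {n m : Type*} [Fintype n] [Fintype m]
    (N : Matrix n n ℂ → Matrix m m ℂ) : Prop :=
  IsLinearMap ℂ N ∧ (∀ X, (N X).trace = X.trace) ∧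
  ∀ (k : ℕ) (X : Matrix (Fin k × n) (Fin k × n) ℂ), X.PosSemidef →
    (Matrix.of fun p q : Fin k × m =>
      N (Matrix.of fun a b : n => X (p.1, a) (q.1, b)) p.2 q.2).PosSemidef

open Classical in
/-- Positive-semidefinite square root (defined to be `0` off the PSD cone). -/
def msqrt {n : Type*} [Fintype n] [DecidableEq n] (M : Matrix n n ℂ) : Matrix n n ℂ :=
  if h : M.PosSemidef then
    h.1.eigenvectorUnitary.1 * diagonal ((↑) ∘ (√·) ∘ h.1.eigenvalues) *
      (star h.1.eigenvectorUnitary : Matrix n n ℂ)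
  else 0

/-- Uhlmann fidelity `F(ρ,σ) = (Tr[√(√σ ρ √σ)])²`. -/
def Fidelity {n : Type*} [Fintype n] [DecidableEq n] (ρ σ : Matrix n n ℂ) : ℝ :=
  ((msqrt (msqrt σ * ρ * msqrt σ)).trace).re ^ 2

/-- Sine distance `P(ρ,σ) = √(1 − F(ρ,σ))`. -/
def sineDist {n : Type*} [Fintype n] [DecidableEq n] (ρ σ : Matrix n n ℂ) : ℝ :=
  Real.sqrt (1 - Fidelity ρ σ)

/-- The smoothing ball `B^ε(ρ)` in sine distance. -/
def smoothBall {n : Type*} [Fintype n] [DecidableEq n] (ε : ℝ) (ρ : Matrix n n ℂ) :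
    Set (Matrix n n ℂ) :=
  {σ | IsDensity σ ∧ sineDist ρ σ ≤ ε}

/-- The reversal channel of Lemma 7/8, with trace term `Tr[(1 − 1_A ⊗ V_B V_B†)σ]`. -/
def RevLoc {HA HB HtB : Type*} [Fintype HA] [DecidableEq HA] [Fintype HB]
    [Fintype HtB] [DecidableEq HtB]
    (U : Matrix HA HA ℂ) (VB : Matrix HtB HB ℂ) (ω : Matrix (HA × HB) (HA × HB) ℂ)
    (σ : Matrix (HA × HtB) (HA × HtB) ℂ) : Matrix (HA × HB) (HA × HB) ℂ :=
  (U ⊗ₖ VB)ᴴ * σ * (U ⊗ₖ VB) +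
    ((1 - (1 : Matrix HA HA ℂ) ⊗ₖ (VB * VBᴴ)) * σ).trace • ω

/-! The partial trace `ptraceA` is linear, sends `ρ ⊗ τ` to `Tr ρ • τ`, commutes with operators
`1 ⊗ X` acting on `B` and is cyclic in the `A` factor, so it is invariant under conjugation by
`U ⊗ 1`. In particular the trace term `Tr[(1 - 1 ⊗ VV†) σ]` of `RevLoc` only sees `Tr_A σ`, and
both sides of the identity equal `ρ_A ⊗ Reversal V_B ω_B σ_B`. -/

section PartialTrace

variable {a a' b c : Type*} [Fintype a] [Fintype a']

-- Identity factors of `⊗ₖ` carry type ascriptions: without them `*` elaborates via `CStarMatrix`.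

lemma ptraceA_add (M N : Matrix (a × b) (a × b) ℂ) :
    ptraceA (M + N) = ptraceA M + ptraceA N := by
  ext i j
  simp [ptraceA, Finset.sum_add_distrib]

lemma ptraceA_smul (z : ℂ) (M : Matrix (a × b) (a × b) ℂ) :
    ptraceA (z • M) = z • ptraceA M := by
  ext i j
  simp [ptraceA, Finset.mul_sum]

lemma ptraceA_kronecker (ρ : Matrix a a ℂ) (τ : Matrix b b ℂ) :
    ptraceA (ρ ⊗ₖ τ) = ρ.trace • τ := by
  ext i j
  simp [ptraceA, Matrix.trace, Finset.sum_mul]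

lemma trace_ptraceA [Fintype b] (M : Matrix (a × b) (a × b) ℂ) : (ptraceA M).trace = M.trace := by
  simp only [ptraceA, Matrix.trace, Matrix.diag, Matrix.of_apply, Fintype.sum_prod_type]
  exact Finset.sum_comm

lemma ptraceA_one_kronecker_mul_mul [DecidableEq a] [Fintype b] [Fintype c]
    (X : Matrix c b ℂ) (M : Matrix (a × b) (a × b) ℂ) (Y : Matrix b c ℂ) :
    ptraceA (((1 : Matrix a a ℂ) ⊗ₖ X) * M * ((1 : Matrix a a ℂ) ⊗ₖ Y)) =
      X * ptraceA M * Y := by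
  ext i j
  simp only [ptraceA, of_apply, Matrix.mul_apply, kroneckerMap_apply, Matrix.one_apply, ite_mul,
    one_mul, zero_mul, mul_ite, mul_zero, Fintype.sum_prod_type, Finset.sum_ite_irrel,
    Finset.sum_const_zero, Finset.sum_ite_eq, Finset.sum_ite_eq', Finset.mem_univ, ↓reduceIte,
    Finset.sum_mul, Finset.mul_sum]
  exact Finset.sum_comm.trans (Finset.sum_congr rfl fun _ _ => Finset.sum_comm)

lemma ptraceA_kronecker_one_mul_comm [Fintype b] [DecidableEq b] (X : Matrix a a' ℂ)
    (M : Matrix (a' × b) (a × b) ℂ) :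
    ptraceA ((X ⊗ₖ (1 : Matrix b b ℂ)) * M) = ptraceA (M * (X ⊗ₖ (1 : Matrix b b ℂ))) := by
  ext i j
  simp only [ptraceA, of_apply, Matrix.mul_apply, kroneckerMap_apply, Matrix.one_apply, mul_ite,
    mul_one, mul_zero, ite_mul, zero_mul, Fintype.sum_prod_type, Finset.sum_ite_eq,
    Finset.sum_ite_eq', Finset.mem_univ, ↓reduceIte]
  rw [Finset.sum_comm]
  exact Finset.sum_congr rfl fun _ _ => Finset.sum_congr rfl fun _ _ => mul_comm _ _

lemma ptraceA_kronecker_one_mul_mul [DecidableEq a'] [Fintype b] [DecidableEq b]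
    (X : Matrix a a' ℂ) (M : Matrix (a' × b) (a' × b) ℂ) (Y : Matrix a' a ℂ) (hYX : Y * X = 1) :
    ptraceA ((X ⊗ₖ (1 : Matrix b b ℂ)) * M * (Y ⊗ₖ (1 : Matrix b b ℂ))) = ptraceA M := by
  rw [Matrix.mul_assoc, ptraceA_kronecker_one_mul_comm, Matrix.mul_assoc, ← mul_kronecker_mul,
    hYX, Matrix.one_mul, one_kronecker_one, Matrix.mul_one]

lemma ptraceA_conj_kronecker [DecidableEq a] [Fintype b] [DecidableEq b] [Fintype c]
    (U : Matrix a a ℂ) (hU : U * Uᴴ = 1) (V : Matrix b c ℂ) (M : Matrix (a × b) (a × b) ℂ) :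
    ptraceA ((U ⊗ₖ V)ᴴ * M * (U ⊗ₖ V)) = Vᴴ * ptraceA M * V := by
  have hsplit : U ⊗ₖ V = (U ⊗ₖ (1 : Matrix b b ℂ)) * ((1 : Matrix a a ℂ) ⊗ₖ V) := by
    rw [← mul_kronecker_mul, Matrix.mul_one, Matrix.one_mul]
  calc ptraceA ((U ⊗ₖ V)ᴴ * M * (U ⊗ₖ V))
      = ptraceA (((1 : Matrix a a ℂ) ⊗ₖ Vᴴ) *
          ((Uᴴ ⊗ₖ (1 : Matrix b b ℂ)) * M * (U ⊗ₖ (1 : Matrix b b ℂ))) *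
          ((1 : Matrix a a ℂ) ⊗ₖ V)) := by
        rw [hsplit, conjTranspose_mul, conjTranspose_kronecker, conjTranspose_kronecker,
          conjTranspose_one, conjTranspose_one]
        simp only [Matrix.mul_assoc]
    _ = Vᴴ * ptraceA M * V := by
        rw [ptraceA_one_kronecker_mul_mul, ptraceA_kronecker_one_mul_mul _ _ _ hU]

lemma trace_one_sub_one_kronecker_mul [DecidableEq a] [Fintype b] [DecidableEq b] (B : Matrix b b ℂ)
    (M : Matrix (a × b) (a × b) ℂ) :
    ((1 - (1 : Matrix a a ℂ) ⊗ₖ B) * M).trace = ((1 - B) * ptraceA M).trace := by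
  have hmarg : ptraceA (((1 : Matrix a a ℂ) ⊗ₖ B) * M) = B * ptraceA M := by
    simpa only [one_kronecker_one, Matrix.mul_one] using
      ptraceA_one_kronecker_mul_mul (a := a) B M 1
  rw [Matrix.sub_mul, Matrix.sub_mul, Matrix.one_mul, Matrix.one_mul, trace_sub, trace_sub,
    ← trace_ptraceA M, ← trace_ptraceA (_ * M), hmarg]

end PartialTrace

section RevLoc

variable {A B B' : Type*} [Fintype A] [DecidableEq A] [Fintype B] [Fintype B'] [DecidableEq B']
  (U : Matrix A A ℂ) (V : Matrix B' B ℂ) (ρ : Matrix A A ℂ) (ω : Matrix B B ℂ)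

lemma revLoc_conj_kronecker (hU : Uᴴ * U = 1) (hρ : ρ.trace = 1) (τ : Matrix B' B' ℂ) :
    RevLoc U V (ρ ⊗ₖ ω) ((U * ρ * Uᴴ) ⊗ₖ τ) = ρ ⊗ₖ Reversal V ω τ := by
  have hconj : Uᴴ * (U * ρ * Uᴴ) * U = ρ := by
    simp only [← Matrix.mul_assoc, hU, Matrix.one_mul]
    rw [Matrix.mul_assoc, hU, Matrix.mul_one]
  have htrace : (U * ρ * Uᴴ).trace = 1 := by
    rw [trace_mul_cycle, hU, Matrix.one_mul, hρ]
  rw [RevLoc, Reversal, conjTranspose_kronecker, ← mul_kronecker_mul, ← mul_kronecker_mul, hconj,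
    trace_one_sub_one_kronecker_mul, ptraceA_kronecker, htrace, one_smul, kronecker_add,
    kronecker_smul]

lemma ptraceA_revLoc (hU : U * Uᴴ = 1) (hρ : ρ.trace = 1) (σ : Matrix (A × B') (A × B') ℂ) :
    ptraceA (RevLoc U V (ρ ⊗ₖ ω) σ) = Reversal V ω (ptraceA σ) := by
  rw [RevLoc, Reversal, ptraceA_add, ptraceA_smul, ptraceA_conj_kronecker U hU,
    ptraceA_kronecker, hρ, one_smul, trace_one_sub_one_kronecker_mul]

end RevLoc

theorem reversal_commutes_marginal_general
    (HA HB HtB : Type) [Fintype HA] [DecidableEq HA] [Fintype HB]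
    [Fintype HtB] [DecidableEq HtB]
    (U : Matrix HA HA ℂ) (hU1 : Uᴴ * U = 1) (hU2 : U * Uᴴ = 1)
    (VB : Matrix HtB HB ℂ)
    (ρA : Matrix HA HA ℂ) (hρA : IsDensity ρA)
    (ωB : Matrix HB HB ℂ)
    (σAB : Matrix (HA × HtB) (HA × HtB) ℂ) :
    RevLoc U VB (ρA ⊗ₖ ωB) ((U * ρA * Uᴴ) ⊗ₖ ptraceA σAB) =
      ρA ⊗ₖ ptraceA (RevLoc U VB (ρA ⊗ₖ ωB) σAB) := by
  rw [revLoc_conj_kronecker U VB ρA ωB hU1 hρA.2, ptraceA_revLoc U VB ρA ωB hU2 hρA.2]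

theorem reversal_commutes_marginal
    (HA HB HtB : Type) [Fintype HA] [DecidableEq HA] [Fintype HB] [DecidableEq HB]
    [Fintype HtB] [DecidableEq HtB]
    (U : Matrix HA HA ℂ) (hU1 : Uᴴ * U = 1) (hU2 : U * Uᴴ = 1)
    (VB : Matrix HtB HB ℂ) (hVB : VBᴴ * VB = 1)
    (ρA : Matrix HA HA ℂ) (hρA : IsDensity ρA)
    (ωB : Matrix HB HB ℂ) (hωB : IsDensity ωB)
    (σAB : Matrix (HA × HtB) (HA × HtB) ℂ) (hσAB : IsDensity σAB) :
    RevLoc U VB (ρA ⊗ₖ ωB) ((U * ρA * Uᴴ) ⊗ₖ ptraceA σAB) =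
      ρA ⊗ₖ ptraceA (RevLoc U VB (ρA ⊗ₖ ωB) σAB) :=
  reversal_commutes_marginal_general HA HB HtB U hU1 hU2 VB ρA hρA ωB σAB

end
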